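/- arXiv:1604.00622 — 2 statements merged into one kernel-verified Lean document; each statement's English description precedes it below -/
import Mathlib

section
/- For nonnegative integers n, r with r \ge n, \sum_{i=0}^{n} {n choose_2 i} e^{it}(e^t-1)^{r-i}/(r-i)! = \sum_{m\ge 0} {m+n choose_2 r} t^m/m!, where {· ·} denotes Stirling numbers of the second kind. -/
open PowerSeries Finset

/-- Stirling numbers of the second kind. -/
def stirling2 : ℕ → ℕ → ℕ
  | 0, 0 => 1
  | 0, _ + 1 => 0
  | _ + 1, 0 => 0
  | n + 1, m + 1 => stirling2 n m + (m + 1) * stirling2 n (m + 1)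

/-!
Write `g k = (eᵗ - 1)ᵏ / k!`, so that `g' (k + 1) = eᵗ g k` and `g' 0 = 0`. Extend the left-hand
side to `F n = ∑_{j ≤ r} {n j} eʲᵗ g (r - j)`, which does not change it when `n ≤ r` but makes sense
for every `n`. The product rule together with the recurrence `{n+1 j} = j {n j} + {n j-1}` gives
`F' n = F (n + 1)`, and the constant term of `F n` is `{n r}`. Hence the `m`-th Taylor coefficient of
`F n` is the constant term of `F (n + m)`, i.e. `{m+n r} / m!`.
-/

open Nat

theorem stirling2_eq_stirlingSecond : stirling2 = stirlingSecond := by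
  funext n k
  induction n generalizing k with
  | zero => cases k <;> rfl
  | succ n ih =>
    cases k with
    | zero => rfl
    | succ k => rw [stirling2, stirlingSecond_succ_succ, ih, ih, add_comm]

theorem Nat.sum_range_stirlingSecond_succ_smul {M : Type*} [AddCommMonoid M]
    (T : ℕ → M) (n r : ℕ) :
    ∑ j ∈ range (r + 1), stirlingSecond (n + 1) j • T j =
      ∑ j ∈ range (r + 1), stirlingSecond n j • j • T j +
        ∑ j ∈ range r, stirlingSecond n j • T (j + 1) := by
  simp only [sum_range_succ' _ r, stirlingSecond_succ_succ, stirlingSecond_succ_zero, zero_smul,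
    add_zero, add_smul, mul_smul, sum_add_distrib, one_smul,
    smul_comm (stirlingSecond n _) (_ : ℕ)]

namespace PowerSeries

variable {A : Type*} [CommRing A] [Algebra ℚ A]

theorem eq_mk_of_derivative_eq_succ (F : ℕ → A⟦X⟧) (hF : ∀ n, d⁄dX A (F n) = F (n + 1))
    (n : ℕ) : F n = mk fun m => (m ! : ℚ)⁻¹ • constantCoeff (F (m + n)) := by
  have hiter : ∀ m, (d⁄dX A)^[m] (F n) = F (m + n) := by
    intro m
    induction m with
    | zero => simp
    | succ m ih => rw [Function.iterate_succ_apply', ih, hF, add_right_comm]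
  ext m
  rw [coeff_mk, ← hiter, constantCoeff_iterate_derivative, ← nsmul_eq_mul,
    ← Nat.cast_smul_eq_nsmul ℚ, inv_smul_smul₀ (by positivity)]

theorem derivative_exp_pow (j : ℕ) : d⁄dX A (exp A ^ j) = j • exp A ^ j := by
  rw [derivative_pow, derivative_exp]
  cases j <;> simp [pow_succ, nsmul_eq_mul, mul_assoc]

theorem derivative_exp_pow_mul (j : ℕ) (f : A⟦X⟧) :
    d⁄dX A (exp A ^ j * f) = j • (exp A ^ j * f) + exp A ^ j * d⁄dX A f := by
  rw [Derivation.leibniz, derivative_exp_pow, smul_eq_mul, smul_eq_mul, mul_smul_comm, mul_comm f,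
    add_comm]

variable (A) in
noncomputable def expSubOnePowDivFact (k : ℕ) : A⟦X⟧ := (k ! : ℚ)⁻¹ • (exp A - 1) ^ k

theorem derivative_expSubOnePowDivFact_succ (k : ℕ) :
    d⁄dX A (expSubOnePowDivFact A (k + 1)) = exp A * expSubOnePowDivFact A k := by
  rw [expSubOnePowDivFact, expSubOnePowDivFact, map_rat_smul, derivative_pow, map_sub,
    derivative_exp, derivative_one, sub_zero, Nat.add_sub_cancel, mul_assoc, ← nsmul_eq_mul,
    ← Nat.cast_smul_eq_nsmul ℚ, smul_smul, mul_comm (exp A), smul_mul_assoc]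
  congr 1
  rw [factorial_succ, cast_mul, mul_inv, mul_right_comm, inv_mul_cancel₀ (by positivity), one_mul]

@[simp]
theorem expSubOnePowDivFact_zero : expSubOnePowDivFact A 0 = 1 := by
  simp [expSubOnePowDivFact]

theorem constantCoeff_expSubOnePowDivFact {k : ℕ} (hk : k ≠ 0) :
    constantCoeff (expSubOnePowDivFact A k) = 0 := by
  simp [expSubOnePowDivFact, hk]

variable (A) in
noncomputable def stirlingExpSum (r n : ℕ) : A⟦X⟧ :=
  ∑ j ∈ range (r + 1), stirlingSecond n j • (exp A ^ j * expSubOnePowDivFact A (r - j))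

theorem derivative_stirlingExpSum (r n : ℕ) :
    d⁄dX A (stirlingExpSum A r n) = stirlingExpSum A r (n + 1) := by
  rw [stirlingExpSum, stirlingExpSum, sum_range_stirlingSecond_succ_smul, map_sum]
  simp only [map_nsmul, derivative_exp_pow_mul, smul_add, sum_add_distrib]
  congr 1
  rw [sum_range_succ, Nat.sub_self, expSubOnePowDivFact_zero, derivative_one, mul_zero, smul_zero,
    add_zero]
  refine sum_congr rfl fun j hj => ?_
  rw [show r - j = r - (j + 1) + 1 by grind, derivative_expSubOnePowDivFact_succ, ← mul_assoc,
    ← pow_succ]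

theorem constantCoeff_stirlingExpSum (r n : ℕ) :
    constantCoeff (stirlingExpSum A r n) = stirlingSecond n r := by
  rw [stirlingExpSum, map_sum, sum_range_succ, sum_eq_zero]
  · simp
  · intro j hj
    rw [map_nsmul, map_mul, constantCoeff_expSubOnePowDivFact (by grind), mul_zero, smul_zero]

theorem stirlingExpSum_eq_mk (r n : ℕ) :
    stirlingExpSum A r n = mk fun m => (m ! : ℚ)⁻¹ • (stirlingSecond (m + n) r : A) := by
  simpa only [constantCoeff_stirlingExpSum] using
    eq_mk_of_derivative_eq_succ (stirlingExpSum A r) (derivative_stirlingExpSum r) n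

end PowerSeries

/-- ∑_{i=0}^n {n,i} e^{it}(e^t-1)^{r-i}/(r-i)! = ∑_m {m+n,r} t^m/m!. -/
theorem takeda_second (n r : ℕ) (h : n ≤ r) :
    ∑ i ∈ range (n + 1),
        ((stirling2 n i : ℚ) / ((r - i).factorial : ℚ)) •
          ((PowerSeries.exp ℚ) ^ i * (PowerSeries.exp ℚ - 1) ^ (r - i)) =
      PowerSeries.mk fun m => (stirling2 (m + n) r : ℚ) / m.factorial := by
  have hsum : ∑ i ∈ range (n + 1),
        ((stirlingSecond n i : ℚ) / ((r - i).factorial : ℚ)) •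
          ((PowerSeries.exp ℚ) ^ i * (PowerSeries.exp ℚ - 1) ^ (r - i)) = stirlingExpSum ℚ r n := by
    rw [stirlingExpSum]
    refine sum_subset (range_subset_range.mpr (by omega)) (fun j _ hj => ?_) |>.trans
      (sum_congr rfl fun j _ => ?_)
    · rw [stirlingSecond_eq_zero_of_lt (by grind), cast_zero, zero_div, zero_smul]
    · rw [expSubOnePowDivFact, div_eq_mul_inv, mul_smul, mul_smul_comm, Nat.cast_smul_eq_nsmul]
  rw [stirling2_eq_stirlingSecond, hsum, stirlingExpSum_eq_mk]
  simp only [smul_eq_mul, div_eq_inv_mul]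
end

section
/- The power series \beta_1(x) = \sum_{n\ge 0} B_n x^{n+1} is the unique element of x Q[[x]] satisfying \beta_1(x/(1-x)) = \beta_1(x) + x^2. -/
open PowerSeries Finset

/-- Formal substitution f(a) = ∑_n (coeff n f) aⁿ for a power series `a` of positive
  order, defined coefficientwise (the tail vanishes since aⁿ has order ≥ n). -/
noncomputable def substPS (a f : PowerSeries ℚ) : PowerSeries ℚ :=
  PowerSeries.mk fun j => ∑ n ∈ range (j + 1), coeff n f * coeff j (a ^ n)
/-- β₁(x) = ∑_{n≥0} Bₙ x^{n+1}. -/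
noncomputable def beta1 : PowerSeries ℚ :=
  PowerSeries.mk fun n => if n = 0 then 0 else bernoulli (n - 1)

/-!
Substituting x/(1-x) acts on coefficients as a binomial transform: since
(x/(1-x))^(i+1) = ∑_{j>i} C(j-1,i) x^j, the coefficient of x^(k+1) in f(x/(1-x)) is
∑_{i≤k} C(k,i) f_{i+1}. For β₁ the functional equation thus becomes the Bernoulli recursion
∑_{i<k} C(k,i) B_i = [k = 1]. For uniqueness, the difference d of two solutions in xℚ[[x]] is
fixed by the substitution, and its coefficient of x^(k+2) yields
(k+1) d_{k+1} = -∑_{i<k} C(k+1,i) d_{i+1}, so d = 0 by strong induction.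
-/

section CommRing

variable {R : Type*} [CommRing R]

lemma inverse_one_sub_X_pow (d : ℕ) :
    Ring.inverse (1 - X : R⟦X⟧) ^ d = invOneSubPow R d := by
  rw [Ring.inverse_pow, ← invOneSubPow_inv_eq_one_sub_pow, Units.inv_eq_val_inv,
    Ring.inverse_unit, inv_inv]

lemma coeff_X_mul_inverse_one_sub_X_pow_succ (m j : ℕ) :
    coeff j ((X * Ring.inverse (1 - X) : R⟦X⟧) ^ (m + 1)) =
      if m + 1 ≤ j then ((j - 1).choose m : R) else 0 := by
  rw [mul_pow, inverse_one_sub_X_pow, invOneSubPow_val_succ_eq_mk_add_choose,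
    coeff_X_pow_mul', coeff_mk]
  split_ifs with h
  · congr 2
    omega
  · rfl

end CommRing

lemma coeff_zero_substPS (a f : ℚ⟦X⟧) : coeff 0 (substPS a f) = coeff 0 f := by
  simp [substPS]

lemma substPS_sub (a f g : ℚ⟦X⟧) : substPS a (f - g) = substPS a f - substPS a g := by
  ext j
  simp [substPS, sub_mul, sum_sub_distrib]

lemma coeff_succ_substPS_X_mul_inverse_one_sub_X (f : ℚ⟦X⟧) (k : ℕ) :
    coeff (k + 1) (substPS (X * Ring.inverse (1 - X)) f) =
      ∑ i ∈ range (k + 1), (k.choose i : ℚ) * coeff (i + 1) f := by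
  rw [substPS, coeff_mk, sum_range_succ', pow_zero, coeff_one, if_neg k.succ_ne_zero, mul_zero,
    add_zero]
  refine sum_congr rfl fun i hi => ?_
  rw [coeff_X_mul_inverse_one_sub_X_pow_succ, if_pos (by simpa using hi), Nat.add_sub_cancel,
    mul_comm]

lemma constantCoeff_beta1 : constantCoeff beta1 = 0 := by
  simp [beta1, ← coeff_zero_eq_constantCoeff_apply]

lemma coeff_succ_beta1 (n : ℕ) : coeff (n + 1) beta1 = bernoulli n := by
  simp [beta1]

lemma substPS_X_mul_inverse_one_sub_X_beta1 :
    substPS (X * Ring.inverse (1 - X)) beta1 = beta1 + X ^ 2 := by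
  ext j
  rcases j with _ | k
  · simp [coeff_zero_substPS, beta1]
  simp_rw [coeff_succ_substPS_X_mul_inverse_one_sub_X, map_add, coeff_X_pow, coeff_succ_beta1]
  rw [sum_range_succ, sum_bernoulli, Nat.choose_self, Nat.cast_one, one_mul, add_comm]
  congr 1
  simp

lemma eq_zero_of_substPS_X_mul_inverse_one_sub_X_eq_self {d : ℚ⟦X⟧}
    (h0 : constantCoeff d = 0) (hd : substPS (X * Ring.inverse (1 - X)) d = d) : d = 0 := by
  ext m
  rw [map_zero]
  induction m using Nat.strong_induction_on with
  | _ m ih =>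
    obtain _ | k := m
    · simpa using h0
    have hk := congrArg (coeff (k + 2)) hd
    rw [coeff_succ_substPS_X_mul_inverse_one_sub_X, sum_range_succ, sum_range_succ,
      Nat.choose_self, Nat.cast_one, one_mul, add_eq_right] at hk
    have hlower : ∑ i ∈ range k, ((k + 1).choose i : ℚ) * coeff (i + 1) d = 0 :=
      sum_eq_zero fun i hi => by rw [ih (i + 1) (by simpa using hi), mul_zero]
    rw [hlower, zero_add, Nat.choose_succ_self_right] at hk
    exact (mul_eq_zero.mp hk).resolve_left (by positivity)

/-- β₁ is the unique element of xℚ[[x]] satisfying β₁(x/(1-x)) = β₁(x) + x². -/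
theorem beta1_unique :
    substPS (X * Ring.inverse (1 - X)) beta1 = beta1 + X ^ 2 ∧
      ∀ h : PowerSeries ℚ, constantCoeff h = 0 →
        substPS (X * Ring.inverse (1 - X)) h = h + X ^ 2 → h = beta1 := by
  refine ⟨substPS_X_mul_inverse_one_sub_X_beta1, fun h h0 hh => ?_⟩
  refine sub_eq_zero.mp (eq_zero_of_substPS_X_mul_inverse_one_sub_X_eq_self ?_ ?_)
  · rw [map_sub, h0, constantCoeff_beta1, sub_zero]
  · rw [substPS_sub, hh, substPS_X_mul_inverse_one_sub_X_beta1, add_sub_add_right_eq_sub]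
end
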